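/- arXiv:1501.03895 — 3 statements merged into one kernel-verified Lean document; each statement's English description precedes it below -/
import Mathlib

section
/- Let Σ be the graded alphabet with Σ_0 = {a,b} and Σ_2 = {f}. The class of tree series realized by RWTAs over Σ with weights in the semiring ℕ is not closed under a-product: there exist RWTAs A_1 and A_2 over Σ such that no RWTA realizes the series P_{A_1} ·_a P_{A_2}. -/
/-- A tree over a graded alphabet `σ` with arity function `ar`. -/
inductive GTree (σ : Type) (ar : σ → ℕ) : Type
  | node (f : σ) (ts : Fin (ar f) → GTree σ ar) : GTree σ ar

/-- A root-weighted tree automaton (RWTA) over the graded alphabet `σ`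
with weights in `M`. -/
structure RWTA (σ : Type) (ar : σ → ℕ) (M : Type) where
  Q : Type
  fin : Finite Q := by infer_instance
  ν : Q → M
  δ : ∀ f : σ, (Fin (ar f) → Q) → Q → Prop

attribute [instance] RWTA.fin

variable {σ : Type} {ar : σ → ℕ} {M : Type}

/-- The reachability map `Δ_A`. -/
def RWTA.Delta (A : RWTA σ ar M) : GTree σ ar → Set A.Q
  | .node f ts => {q | ∃ qs : Fin (ar f) → A.Q,
      (∀ i, qs i ∈ A.Delta (ts i)) ∧ A.δ f qs q}

/-- The tree series realized by an RWTA: `P_A(t) = ν(Δ_A(t))`. -/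
noncomputable def RWTA.P [AddCommMonoid M] (A : RWTA σ ar M) (t : GTree σ ar) : M :=
  ∑ᶠ q ∈ A.Delta t, A.ν q

/-- An RWTA is sequential when `Card (Δ_A(t)) ≤ 1` for every tree. -/
def RWTA.Sequential (A : RWTA σ ar M) : Prop :=
  ∀ t : GTree σ ar, (A.Delta t).Subsingleton

/-- The down language of a state. -/
def RWTA.DownLang (A : RWTA σ ar M) (q : A.Q) : Set (GTree σ ar) :=
  {t | q ∈ A.Delta t}

/-- The sequential RWTA associated with `A` by the subset construction. -/
noncomputable def RWTA.subset [AddCommMonoid M] (A : RWTA σ ar M) : RWTA σ ar M where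
  Q := Set A.Q
  ν := fun S => ∑ᶠ q ∈ S, A.ν q
  δ := fun f Qs S =>
    S = {q | ∃ qs : Fin (ar f) → A.Q, (∀ i, qs i ∈ Qs i) ∧ A.δ f qs q}

/-- The accessible part of an RWTA. -/
def RWTA.acc (A : RWTA σ ar M) : RWTA σ ar M where
  Q := {q : A.Q // (A.DownLang q).Nonempty}
  ν := fun q => A.ν q.1
  δ := fun f qs q => A.δ f (fun i => (qs i).1) q.1

/-- The sum of two RWTAs (on the disjoint union of the state sets). -/
def RWTA.sum (A₁ A₂ : RWTA σ ar M) : RWTA σ ar M where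
  Q := A₁.Q ⊕ A₂.Q
  ν := Sum.elim A₁.ν A₂.ν
  δ := fun f qs q =>
    (∃ (qs' : Fin (ar f) → A₁.Q) (q' : A₁.Q),
        q = Sum.inl q' ∧ (∀ i, qs i = Sum.inl (qs' i)) ∧ A₁.δ f qs' q') ∨
    (∃ (qs' : Fin (ar f) → A₂.Q) (q' : A₂.Q),
        q = Sum.inr q' ∧ (∀ i, qs i = Sum.inr (qs' i)) ∧ A₂.δ f qs' q')

/-- The product of two RWTAs. -/
def RWTA.prod [Mul M] (A₁ A₂ : RWTA σ ar M) : RWTA σ ar M where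
  Q := A₁.Q × A₂.Q
  ν := fun q => A₁.ν q.1 * A₂.ν q.2
  δ := fun f qs q =>
    A₁.δ f (fun i => (qs i).1) q.1 ∧ A₂.δ f (fun i => (qs i).2) q.2

/-- The quotient of an RWTA by an equivalence relation on its states. -/
noncomputable def RWTA.quot [AddCommMonoid M] (A : RWTA σ ar M) (s : Setoid A.Q) :
    RWTA σ ar M where
  Q := Quotient s
  ν := fun C => ∑ᶠ q ∈ {q : A.Q | Quotient.mk s q = C}, A.ν q
  δ := fun f Cs C => ∃ (qs : Fin (ar f) → A.Q) (q : A.Q),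
    (∀ i, Quotient.mk s (qs i) = Cs i) ∧ Quotient.mk s q = C ∧ A.δ f qs q

/-- Relabelling of trees along a rank-preserving map of symbols. -/
def GTree.map {Γ : Type} {arΓ : Γ → ℕ} (g : σ → Γ) (hg : ∀ f, arΓ (g f) = ar f) :
    GTree σ ar → GTree Γ arΓ
  | .node f ts => .node (g f) (fun i => GTree.map g hg (ts (Fin.cast (hg f) i)))

/-- A morphism of RWTAs. -/
structure RWTA.Morphism {Γ : Type} {arΓ : Γ → ℕ}
    (A₁ : RWTA σ ar M) (A₂ : RWTA Γ arΓ M) where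
  stateMap : A₁.Q → A₂.Q
  symMap : σ → Γ
  symRank : ∀ f, arΓ (symMap f) = ar f
  transMap : ∀ (f : σ) (qs : Fin (ar f) → A₁.Q) (q : A₁.Q), A₁.δ f qs q →
    A₂.δ (symMap f) (fun i => stateMap (qs (Fin.cast (symRank f) i))) (stateMap q)
  weightMap : ∀ q, A₂.ν (stateMap q) = A₁.ν q

/-- Two RWTAs are isomorphic when there are mutually inverse morphisms between them. -/
def RWTA.Isomorphic {Γ : Type} {arΓ : Γ → ℕ}
    (A₁ : RWTA σ ar M) (A₂ : RWTA Γ arΓ M) : Prop :=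
  ∃ (μ : A₁.Morphism A₂) (μ' : A₂.Morphism A₁),
    (∀ q, μ'.stateMap (μ.stateMap q) = q) ∧ (∀ q, μ.stateMap (μ'.stateMap q) = q) ∧
    (∀ f, μ'.symMap (μ.symMap f) = f) ∧ (∀ f, μ.symMap (μ'.symMap f) = f)

/-- The size (number of nodes) of a tree. -/
def GTree.size : GTree σ ar → ℕ
  | .node _ ts => 1 + ∑ i, (ts i).size

/-- The set of subtrees of a tree. -/
def GTree.subTrees : GTree σ ar → Set (GTree σ ar)
  | .node f ts => insert (.node f ts) (⋃ i, (ts i).subTrees)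

theorem GTree.subTrees_finite (t : GTree σ ar) : t.subTrees.Finite := by
  induction t with
  | node f ts ih => exact Set.Finite.insert _ (Set.finite_iUnion fun i => ih i)

-- `t.subCount s` is the number of occurrences of `s` as a subtree of `t`,
-- i.e. `SubTreeSeries_t(s)`.
open Classical in
noncomputable def GTree.subCount : GTree σ ar → GTree σ ar → ℕ
  | .node f ts, s =>
      (if GTree.node f ts = s then 1 else 0) + ∑ i, (ts i).subCount s

/-- Indexing of the symbols of a tree by their position in a prefix traversal
(auxiliary function, threading the position of the root). -/
def GTree.sharpAux : GTree σ ar → ℕ → GTree (σ × ℕ) (fun p => ar p.1)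
  | .node f ts, n => .node (f, n) (fun i =>
      (ts i).sharpAux (n + 1 + ∑ j : Fin (ar f), if j.1 < i.1 then (ts j).size else 0))

/-- `t^♯`: the tree `t` with each symbol indexed by its prefix-traversal position. -/
def GTree.sharp (t : GTree σ ar) : GTree (σ × ℕ) (fun p => ar p.1) := t.sharpAux 0

/-- The map `h` dropping the indexes. -/
def GTree.unsharp : GTree (σ × ℕ) (fun p => ar p.1) → GTree σ ar :=
  GTree.map Prod.fst (fun _ => rfl)

/-- The subtree automaton `A_t` associated with a tree `t`. -/
def subtreeAut (t : GTree σ ar) : RWTA σ ar ℕ where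
  Q := {r // r ∈ t.sharp.subTrees}
  fin := (t.sharp.subTrees_finite).to_subtype
  ν := fun _ => 1
  δ := fun f qs q => ∃ n : ℕ,
    (q : GTree (σ × ℕ) (fun p => ar p.1)) = .node (f, n) (fun i => (qs i : GTree (σ × ℕ) (fun p => ar p.1)))

/-- The equivalence `∼_h` on the states of the subtree automaton. -/
def simH (t : GTree σ ar) : Setoid (subtreeAut t).Q :=
  Setoid.ker (fun r => GTree.unsharp r.1)

/-- The sequential subtree automaton `seq(A_t)` associated with a tree `t`. -/
noncomputable def seqSubtreeAut (t : GTree σ ar) : RWTA σ ar ℕ where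
  Q := {r // r ∈ t.subTrees}
  fin := (t.subTrees_finite).to_subtype
  ν := fun r => t.subCount r.1
  δ := fun f qs q => (q : GTree σ ar) = .node f (fun i => (qs i : GTree σ ar))

/-- `SubTreeSet(L)`. -/
def subTreeSet (L : Set (GTree σ ar)) : Set (GTree σ ar) := ⋃ t ∈ L, t.subTrees

/-- `SubTreeSeries_L`. -/
noncomputable def subSeriesL (L : Set (GTree σ ar)) (s : GTree σ ar) : ℕ :=
  ∑ᶠ t ∈ L, t.subCount s

/-- The sequential subtree automaton `A_L` associated with a finite tree language. -/
noncomputable def langSubtreeAut (L : Set (GTree σ ar)) (hL : L.Finite) : RWTA σ ar ℕ where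
  Q := {r // r ∈ subTreeSet L}
  fin := (hL.biUnion fun t _ => t.subTrees_finite).to_subtype
  ν := fun r => subSeriesL L r.1
  δ := fun f qs q => (q : GTree σ ar) = .node f (fun i => (qs i : GTree σ ar))

-- concrete alphabet for stmts 8/9
/-- The graded alphabet with `Σ_0 = {a,b}` and `Σ_2 = {f}`. -/
inductive ABF : Type | a | b | f

/-- The arity function: `a` and `b` are constants, `f` is binary. -/
def arABF : ABF → ℕ | .a => 0 | .b => 0 | .f => 2

/-- Substitution of the (unique tree of the) language `{s}` for the
constant symbol `a` in a tree, i.e. the unique element of `t_{a ← {s}}`. -/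
def substA : GTree ABF arABF → GTree ABF arABF → GTree ABF arABF
  | .node .a _, s => s
  | .node .b ts, _ => .node .b ts
  | .node .f ts, s => .node .f (fun i => substA (ts i) s)

/-- The `a`-product of two tree series over `ℕ`. -/
noncomputable def aProd (P₁ P₂ : GTree ABF arABF → ℕ) (t : GTree ABF arABF) : ℕ :=
  ∑ᶠ p ∈ {p : GTree ABF arABF × GTree ABF arABF | substA p.1 p.2 = t}, P₁ p.1 * P₂ p.2


/-!
The series realized by an RWTA with weights in `ℕ` is bounded by the total root weight
`∑ q, ν q`, since `P_A(t)` sums `ν` over a subset of the finite state set. Take for `P₁` the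
constant series `1` and for `P₂` the indicator of the tree `b`. Then `(P₁ ·_a P₂)(t)` counts the
trees `s` with `s_{a←{b}} = t`, i.e. the ways of relabelling some `b`-leaves of `t` by `a`; on the
comb with `n + 1` leaves `b` there are `2 ^ (n + 1)` of them, so the product is unbounded.
-/

open Finset Classical

namespace RWTA

theorem P_le_finsum_ν [AddCommMonoid M] [PartialOrder M] [CanonicallyOrderedAdd M]
    (A : RWTA σ ar M) (t : GTree σ ar) : A.P t ≤ ∑ᶠ q, A.ν q := by
  have := Fintype.ofFinite A.Q
  rw [RWTA.P, finsum_mem_eq_sum _ (Set.toFinite _), finsum_eq_sum_of_fintype]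
  exact sum_le_sum_of_subset (subset_univ _)

def const (σ : Type) (ar : σ → ℕ) (m : M) : RWTA σ ar M where
  Q := Unit
  ν _ := m
  δ _ _ _ := True

theorem P_const [AddCommMonoid M] (m : M) (t : GTree σ ar) : (const σ ar m).P t = m := by
  have hΔ : (const σ ar m).Delta t = Set.univ := by
    induction t with
    | node f ts ih =>
      exact Set.eq_univ_of_forall fun _ => ⟨fun _ => (), fun i => (ih i).symm ▸ trivial, trivial⟩
  rw [RWTA.P, hΔ, finsum_mem_univ]
  exact finsum_unique (α := Unit) _

end RWTA

local notation "T" => GTree ABF arABF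

def aLeaf : T := .node .a Fin.elim0
def bLeaf : T := .node .b Fin.elim0

theorem eq_aLeaf (ts : Fin (arABF .a) → T) : GTree.node .a ts = aLeaf :=
  congrArg _ (funext fun i => i.elim0)

theorem eq_bLeaf (ts : Fin (arABF .b) → T) : GTree.node .b ts = bLeaf :=
  congrArg _ (funext fun i => i.elim0)

def bLeafAut : RWTA ABF arABF ℕ where
  Q := Unit
  ν _ := 1
  δ g _ _ := g = .b

theorem mem_bLeafAut_Delta (q : bLeafAut.Q) (t : T) : q ∈ bLeafAut.Delta t ↔ t = bLeaf := by
  obtain ⟨g, ts⟩ := t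
  cases g
  case b => exact iff_of_true ⟨fun _ => (), fun i => Fin.elim0 i, rfl⟩ (eq_bLeaf ts)
  all_goals exact iff_of_false (fun ⟨_, _, h⟩ => nomatch h) (fun h => nomatch h)

theorem bLeafAut_P (t : T) : bLeafAut.P t = if t = bLeaf then 1 else 0 := by
  by_cases h : t = bLeaf
  · rw [if_pos h, RWTA.P, Set.eq_univ_of_forall fun q => (mem_bLeafAut_Delta q t).2 h,
      finsum_mem_univ]
    exact finsum_unique (α := Unit) _
  · rw [if_neg h, RWTA.P,
      Set.eq_empty_of_forall_notMem fun q hq => h ((mem_bLeafAut_Delta q t).1 hq), finsum_mem_empty]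

noncomputable def bRelabelings : T → Finset T
  | .node .a _ => ∅
  | .node .b _ => {aLeaf, bLeaf}
  | .node .f ts => (Fintype.piFinset fun i => bRelabelings (ts i)).image (.node .f)

theorem bRelabelings_bLeaf : bRelabelings bLeaf = {aLeaf, bLeaf} := rfl

theorem mem_bRelabelings (s t : T) : s ∈ bRelabelings t ↔ substA s bLeaf = t := by
  constructor
  · induction t generalizing s with
    | node g ts ih =>
      cases g
      · simp [bRelabelings]
      · rw [eq_bLeaf ts, bRelabelings_bLeaf, mem_insert, mem_singleton]
        rintro (rfl | rfl) <;> rfl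
      · simp only [bRelabelings, mem_image, Fintype.mem_piFinset]
        rintro ⟨ss, hss, rfl⟩
        exact congrArg _ (funext fun i => ih i _ (hss i))
  · rintro rfl
    induction s with
    | node g ss ih =>
      cases g
      · rw [eq_aLeaf ss]
        exact mem_insert_self _ _
      · rw [eq_bLeaf ss]
        exact mem_insert_of_mem (mem_singleton_self _)
      · exact mem_image_of_mem _ (Fintype.mem_piFinset.2 ih)

theorem card_bRelabelings_f (ts : Fin (arABF .f) → T) :
    #(bRelabelings (.node .f ts)) = ∏ i, #(bRelabelings (ts i)) := by
  rw [bRelabelings, card_image_of_injective _ (fun _ _ h => by cases h; rfl), Fintype.card_piFinset]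

theorem card_bRelabelings_bLeaf : #(bRelabelings bLeaf) = 2 :=
  card_pair fun h => nomatch h

def comb : ℕ → T
  | 0 => bLeaf
  | n + 1 => .node .f ![comb n, bLeaf]

theorem card_bRelabelings_comb (n : ℕ) : #(bRelabelings (comb n)) = 2 ^ (n + 1) := by
  induction n with
  | zero => exact card_bRelabelings_bLeaf
  | succ n ih =>
    calc #(bRelabelings (comb (n + 1)))
        = #(bRelabelings (comb n)) * #(bRelabelings bLeaf) :=
          (card_bRelabelings_f _).trans (Fin.prod_univ_two _)
      _ = 2 ^ (n + 1 + 1) := by rw [ih, card_bRelabelings_bLeaf, ← pow_succ]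

theorem aProd_const_bLeafAut (t : T) :
    aProd (RWTA.const ABF arABF 1).P bLeafAut.P t = #(bRelabelings t) := by
  have hsupp : {p : T × T | substA p.1 p.2 = t} ∩
      Function.support (fun p : T × T => (RWTA.const ABF arABF 1).P p.1 * bLeafAut.P p.2) =
      (fun s => (s, bLeaf)) '' ↑(bRelabelings t) := by
    ext ⟨s, s'⟩
    simp only [RWTA.P_const, bLeafAut_P, mul_ite, mul_one, mul_zero, Set.mem_inter_iff,
      Set.mem_ofPred_eq, Function.mem_support, ne_eq, ite_eq_right_iff, one_ne_zero, imp_false,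
      Decidable.not_not, Set.mem_image, SetLike.mem_coe, mem_bRelabelings, Prod.mk.injEq,
      ↓existsAndEq, true_and]
    constructor <;> rintro ⟨rfl, rfl⟩ <;> exact ⟨rfl, rfl⟩
  rw [aProd, ← finsum_mem_inter_support, hsupp,
    finsum_mem_image fun _ _ _ _ h => (Prod.ext_iff.1 h).1, finsum_mem_coe_finset]
  simp [RWTA.P_const, bLeafAut_P]

theorem aProd_not_closed :
    ∃ A₁ A₂ : RWTA ABF arABF ℕ,
      ∀ A : RWTA ABF arABF ℕ, ¬ ∀ t : GTree ABF arABF, A.P t = aProd A₁.P A₂.P t := by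
  refine ⟨RWTA.const ABF arABF 1, bLeafAut, fun A hA => ?_⟩
  set N := ∑ᶠ q, A.ν q
  have hbound := A.P_le_finsum_ν (comb N)
  rw [hA, aProd_const_bLeafAut, card_bRelabelings_comb, pow_succ] at hbound
  have := N.lt_two_pow_self
  omega
end

section
/- Let Σ be a graded alphabet and t a tree in T_Σ. The equivalence relation ∼_h (defined on the states of the subtree automaton A_t by r_1 ∼_h r_2 iff h(r_1) = h(r_2)) is down compatible with A_t: r_1 ∼_h r_2 implies L_{r_1}(A_t) = L_{r_2}(A_t). Moreover, for every state r of A_t, L_r(A_t) = {h(r)}. -/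
variable {σ : Type} {ar : σ → ℕ} {M : Type}

namespace GTree

lemma mem_subTrees_self (u : GTree σ ar) : u ∈ u.subTrees := by
  cases u
  exact Set.mem_insert _ _

lemma mem_subTrees_node {f : σ} {ts : Fin (ar f) → GTree σ ar} {s : GTree σ ar} (i : Fin (ar f))
    (hs : s ∈ (ts i).subTrees) : s ∈ (node f ts).subTrees :=
  Set.mem_insert_of_mem _ (Set.mem_iUnion_of_mem i hs)

lemma child_mem_subTrees {u : GTree σ ar} {f : σ} {ts : Fin (ar f) → GTree σ ar}
    (h : node f ts ∈ u.subTrees) (i : Fin (ar f)) : ts i ∈ u.subTrees := by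
  induction u with
  | node g us ih =>
    rcases h with h | h
    · rw [← h]
      exact mem_subTrees_node i (ts i).mem_subTrees_self
    · obtain ⟨j, hj⟩ := Set.mem_iUnion.mp h
      exact mem_subTrees_node j (ih j hj)

end GTree

section SubtreeAut

variable (t : GTree σ ar)

lemma subtreeAut_mem_delta_unsharp (s : GTree (σ × ℕ) (fun p => ar p.1))
    (hs : s ∈ t.sharp.subTrees) : (⟨s, hs⟩ : (subtreeAut t).Q) ∈ (subtreeAut t).Delta s.unsharp := by
  induction s with
  | node p c ih =>
    exact ⟨fun i => ⟨c i, GTree.child_mem_subTrees hs i⟩,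
      fun i => ih i (GTree.child_mem_subTrees hs i), p.2, rfl⟩

lemma subtreeAut_unsharp_eq_of_mem_delta {r : (subtreeAut t).Q} {u : GTree σ ar}
    (h : r ∈ (subtreeAut t).Delta u) : r.1.unsharp = u := by
  induction u generalizing r with
  | node f ts ih =>
    obtain ⟨qs, hqs, n, hr⟩ := h
    rw [hr]
    exact congrArg (GTree.node f) (funext fun i => ih i (hqs i))

theorem subtreeAut_downLang (r : (subtreeAut t).Q) :
    (subtreeAut t).DownLang r = {r.1.unsharp} := by
  ext u
  refine ⟨fun h => (subtreeAut_unsharp_eq_of_mem_delta t h).symm, ?_⟩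
  rintro rfl
  exact subtreeAut_mem_delta_unsharp t r.1 r.2

end SubtreeAut

theorem simH_down_compatible {σ : Type} {ar : σ → ℕ} (t : GTree σ ar) :
    (∀ r₁ r₂ : (subtreeAut t).Q, GTree.unsharp r₁.1 = GTree.unsharp r₂.1 →
      (subtreeAut t).DownLang r₁ = (subtreeAut t).DownLang r₂) ∧
    (∀ r : (subtreeAut t).Q, (subtreeAut t).DownLang r = {GTree.unsharp r.1}) :=
  ⟨fun r₁ r₂ h => by rw [subtreeAut_downLang, subtreeAut_downLang, h], subtreeAut_downLang t⟩
end

section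
/- Let Σ be a graded alphabet, L a finite tree language over Σ, and A_L = (Σ,Q,ν,δ) the sequential subtree automaton associated with L. Then for every tree r ∈ SubTreeSet(L), Δ_{A_L}(r) = {r}. -/
variable {σ : Type} {ar : σ → ℕ} {M : Type}

theorem GTree.mem_subTrees_self_s16 (t : GTree σ ar) : t ∈ t.subTrees := by
  cases t
  exact Set.mem_insert _ _

theorem GTree.subTrees_child {t : GTree σ ar} {f : σ} {ts : Fin (ar f) → GTree σ ar}
    (h : GTree.node f ts ∈ t.subTrees) (i : Fin (ar f)) : ts i ∈ t.subTrees := by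
  induction t with
  | node g us ih =>
    rcases h with h | h
    · cases h
      exact Set.mem_insert_of_mem _ (Set.mem_iUnion.2 ⟨i, (ts i).mem_subTrees_self_s16⟩)
    · obtain ⟨j, hj⟩ := Set.mem_iUnion.1 h
      exact Set.mem_insert_of_mem _ (Set.mem_iUnion.2 ⟨j, ih j hj⟩)

theorem subTreeSet_child {L : Set (GTree σ ar)} {f : σ} {ts : Fin (ar f) → GTree σ ar}
    (h : GTree.node f ts ∈ subTreeSet L) (i : Fin (ar f)) : ts i ∈ subTreeSet L := by
  obtain ⟨t, ht, hsub⟩ := Set.mem_iUnion₂.1 h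
  exact Set.mem_iUnion₂.2 ⟨t, ht, t.subTrees_child hsub i⟩

theorem RWTA.Delta_node_of_Delta_eq_singleton (A : RWTA σ ar M) {f : σ}
    {ts : Fin (ar f) → GTree σ ar} {ps : Fin (ar f) → A.Q}
    (h : ∀ i, A.Delta (ts i) = {ps i}) :
    A.Delta (.node f ts) = {q | A.δ f ps q} := by
  ext q
  simp only [RWTA.Delta, h, Set.mem_singleton_iff, Set.mem_ofPred_eq]
  constructor
  · rintro ⟨qs, hqs, hq⟩
    rwa [funext hqs] at hq
  · exact fun hq => ⟨ps, fun _ => rfl, hq⟩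

theorem langSubtreeAut_delta {σ : Type} {ar : σ → ℕ}
    (L : Set (GTree σ ar)) (hL : L.Finite)
    (r : GTree σ ar) (hr : r ∈ subTreeSet L) :
    (langSubtreeAut L hL).Delta r = {⟨r, hr⟩} := by
  induction r with
  | node f ts ih =>
    rw [RWTA.Delta_node_of_Delta_eq_singleton _ fun i => ih i (subTreeSet_child hr i)]
    ext q
    exact ⟨fun hq => Subtype.ext hq, fun hq => congrArg Subtype.val hq⟩
end
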